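/- In the online reusable resource allocation problem ORRA_n with reuse delay d, the problem is d-bounded-influence: for any histories I = (e_{1:m}, a_{1:m}) and I' = (e'_{1:m}, a'_{1:m}) and any request suffix e_{m+1:∞} with finite support, Opt(ORRA_n^I, e_{m+1:∞}) ≥ Opt(ORRA_n^{I'}, e_{m+1:∞}) - d. -/

import Mathlib

/-!
After any history ending at period `m`, a policy can reject every request during the periods
`m + 1, …, m + d - 1`; by period `m + d` every resource is available again, so from then on it
can replay the successful allocations of any policy run from any other history. Only the
`d - 1` idle periods are lost.
-/

/-- Next-availability times of the `n` reusable resources after `t` periods: resource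
`i`, if allocated at period `t+1` (eligible, chosen and currently available), becomes
available again only at period `t+1+d`. -/
def Wt (n d : ℕ) (e : ℕ → Fin n → Bool) (a : ℕ → Option (Fin n)) :
    ℕ → Fin n → ℕ
  | 0 => fun _ => 1
  | t + 1 => fun i =>
      if a (t + 1) = some i ∧ Wt n d e a t i ≤ t + 1 ∧ e (t + 1) i = true
      then t + 1 + d else Wt n d e a t i

/-- Reward of the online reusable resource allocation problem ORRA_n at period `t`:
`1` iff the request at period `t` is successfully fulfilled. -/
def Rorra (n d : ℕ) (e : ℕ → Fin n → Bool) (a : ℕ → Option (Fin n)) (t : ℕ) : ℕ :=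
  match a t with
  | none => 0
  | some i => if Wt n d e a t i = t + d then 1 else 0

open Finset

section Orra

variable {n d : ℕ} {e : ℕ → Fin n → Bool} {a : ℕ → Option (Fin n)}

theorem Wt_le_add (hd : 1 ≤ d) (t : ℕ) (i : Fin n) : Wt n d e a t i ≤ t + d := by
  induction t with
  | zero => simpa [Wt] using hd
  | succ t ih =>
    simp only [Wt]
    split <;> omega

theorem Wt_le_Wt_succ (hd : 1 ≤ d) (t : ℕ) (i : Fin n) :
    Wt n d e a t i ≤ Wt n d e a (t + 1) i := by
  have := Wt_le_add (e := e) (a := a) hd t i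
  simp only [Wt]
  split <;> omega

theorem Wt_succ_eq_add_iff (hd : 1 ≤ d) (t : ℕ) (i : Fin n) :
    Wt n d e a (t + 1) i = t + 1 + d ↔
      a (t + 1) = some i ∧ Wt n d e a t i ≤ t + 1 ∧ e (t + 1) i = true := by
  have := Wt_le_add (e := e) (a := a) hd t i
  simp only [Wt]
  split_ifs with h
  · simp [h]
  · simp only [h, iff_false]
    omega

theorem Rorra_le_one (t : ℕ) : Rorra n d e a t ≤ 1 := by
  unfold Rorra
  split
  · exact zero_le_one
  · split_ifs <;> simp

theorem Rorra_eq_one_iff (t : ℕ) :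
    Rorra n d e a t = 1 ↔ ∃ i, a t = some i ∧ Wt n d e a t i = t + d := by
  unfold Rorra
  split <;> simp_all

theorem sum_Rorra_le_card (s : Finset ℕ) : ∑ t ∈ s, Rorra n d e a t ≤ #s := by
  simpa using sum_le_card_nsmul s _ 1 fun t _ => Rorra_le_one (e := e) (a := a) t

end Orra

def idleThenReplay (n d m : ℕ) (e' : ℕ → Fin n → Bool) (a b' : ℕ → Option (Fin n)) :
    ℕ → Option (Fin n) :=
  fun s => if s ≤ m then a s else if m + d ≤ s ∧ Rorra n d e' b' s = 1 then b' s else none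

section IdleThenReplay

variable {n d m : ℕ} {e e' : ℕ → Fin n → Bool} {a b' : ℕ → Option (Fin n)}

theorem idleThenReplay_of_le {s : ℕ} (hs : s ≤ m) : idleThenReplay n d m e' a b' s = a s := by
  simp [idleThenReplay, hs]

theorem Wt_idleThenReplay_le (hd : 1 ≤ d) {t : ℕ} (ht : m ≤ t) (i : Fin n) :
    Wt n d e (idleThenReplay n d m e' a b') t i ≤ max (Wt n d e' b' t i) (m + d) := by
  induction t, ht using Nat.le_induction generalizing i with
  | base => exact le_max_of_le_right (by simpa using Wt_le_add hd m i)
  | succ t hmt ih =>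
    by_cases halloc : Wt n d e (idleThenReplay n d m e' a b') (t + 1) i = t + 1 + d
    · obtain ⟨hb, -, -⟩ := (Wt_succ_eq_add_iff hd t i).1 halloc
      simp only [idleThenReplay, show ¬t + 1 ≤ m by omega, if_false] at hb
      split_ifs at hb with hcopy
      obtain ⟨j, hj, hWj⟩ := (Rorra_eq_one_iff _).1 hcopy.2
      obtain rfl : j = i := Option.some_injective _ (hj.symm.trans hb)
      exact le_max_of_le_left (halloc.trans hWj.symm).le
    · have hstay : Wt n d e (idleThenReplay n d m e' a b') (t + 1) i =
          Wt n d e (idleThenReplay n d m e' a b') t i := by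
        simp only [Wt]
        split_ifs with h
        · exact absurd ((Wt_succ_eq_add_iff hd t i).2 h) halloc
        · rfl
      rw [hstay]
      exact (ih i).trans (max_le_max_right _ (Wt_le_Wt_succ hd t i))

theorem Rorra_le_Rorra_idleThenReplay (hd : 1 ≤ d) (he : ∀ t, m < t → e t = e' t) {t : ℕ}
    (ht : m + d ≤ t) : Rorra n d e' b' t ≤ Rorra n d e (idleThenReplay n d m e' a b') t := by
  obtain ⟨s, rfl⟩ : ∃ s, t = s + 1 := ⟨t - 1, by omega⟩
  by_cases hsucc : Rorra n d e' b' (s + 1) = 1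
  · obtain ⟨i, hb', hWi⟩ := (Rorra_eq_one_iff _).1 hsucc
    obtain ⟨-, hfree', helig⟩ := (Wt_succ_eq_add_iff hd s i).1 hWi
    have hb : idleThenReplay n d m e' a b' (s + 1) = some i := by
      simp [idleThenReplay, show ¬s + 1 ≤ m by omega, ht, hsucc, hb']
    have hfree : Wt n d e (idleThenReplay n d m e' a b') s i ≤ s + 1 :=
      (Wt_idleThenReplay_le hd (by omega) i).trans (max_le hfree' ht)
    have hWi' := (Wt_succ_eq_add_iff hd s i).2 ⟨hb, hfree, by rwa [he _ (by omega)]⟩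
    exact hsucc.le.trans ((Rorra_eq_one_iff _).2 ⟨i, hb, hWi'⟩).ge
  · have := Rorra_le_one (e := e') (a := b') (d := d) (s + 1)
    omega

end IdleThenReplay

theorem sum_Icc_le_sum_Icc_add {f g : ℕ → ℕ} {m M d : ℕ} (hf : ∀ t, f t ≤ 1)
    (hfg : ∀ t, m + d ≤ t → f t ≤ g t) :
    ∑ t ∈ Icc (m + 1) M, f t ≤ ∑ t ∈ Icc (m + 1) M, g t + d := by
  have hcard : #((Icc (m + 1) M).filter (· < m + d)) ≤ d := by
    calc #((Icc (m + 1) M).filter (· < m + d))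
        ≤ #(Ico (m + 1) (m + d)) := card_le_card fun t ht => by
          simp only [mem_filter, mem_Icc, mem_Ico] at ht ⊢
          omega
      _ ≤ d := by rw [Nat.card_Ico]; omega
  calc ∑ t ∈ Icc (m + 1) M, f t
      ≤ ∑ t ∈ Icc (m + 1) M, (g t + if t < m + d then 1 else 0) :=
        sum_le_sum fun t _ => by
          have := hf t
          have := hfg t
          split_ifs <;> omega
    _ ≤ ∑ t ∈ Icc (m + 1) M, g t + d := by
        rw [sum_add_distrib, sum_ite, sum_const_zero, add_zero, sum_const, smul_eq_mul, mul_one]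
        omega

theorem exists_sum_Rorra_le_sum_Rorra_add {n d : ℕ} (hd : 1 ≤ d) (m M : ℕ)
    {e e' : ℕ → Fin n → Bool} (he : ∀ t, m < t → e t = e' t) (a b' : ℕ → Option (Fin n)) :
    ∃ b : ℕ → Option (Fin n), (∀ s, s ≤ m → b s = a s) ∧
      ∑ t ∈ Icc (m + 1) M, Rorra n d e' b' t ≤ ∑ t ∈ Icc (m + 1) M, Rorra n d e b t + d :=
  ⟨idleThenReplay n d m e' a b', fun _ => idleThenReplay_of_le,
    sum_Icc_le_sum_Icc_add Rorra_le_one fun _ => Rorra_le_Rorra_idleThenReplay hd he⟩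

theorem stmt_13_general (n d : ℕ) (hd : 1 ≤ d) (m M : ℕ)
    (e e' : ℕ → Fin n → Bool) (a a' : ℕ → Option (Fin n))
    (f : ℕ → Fin n → Bool) :
    (⨆ b : {b : ℕ → Option (Fin n) // ∀ s, s ≤ m → b s = a s},
        ((∑ t ∈ Finset.Icc (m + 1) M,
            Rorra n d (fun s => if s ≤ m then e s else f s) b.1 t : ℕ) : ℝ))
      ≥ (⨆ b : {b : ℕ → Option (Fin n) // ∀ s, s ≤ m → b s = a' s},
          ((∑ t ∈ Finset.Icc (m + 1) M,
              Rorra n d (fun s => if s ≤ m then e' s else f s) b.1 t : ℕ) : ℝ))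
        - (d : ℝ) := by
  have hsuffix : ∀ t, m < t →
      (fun s => if s ≤ m then e s else f s) t = (fun s => if s ≤ m then e' s else f s) t :=
    fun t ht => by simp [show ¬t ≤ m by omega]
  have hbdd : BddAbove (Set.range fun b : {b : ℕ → Option (Fin n) // ∀ s, s ≤ m → b s = a s} =>
      ((∑ t ∈ Icc (m + 1) M, Rorra n d (fun s => if s ≤ m then e s else f s) b.1 t : ℕ) : ℝ)) :=
    ⟨#(Icc (m + 1) M), by
      rintro _ ⟨b, rfl⟩
      dsimp only
      exact_mod_cast sum_Rorra_le_card (Icc (m + 1) M)⟩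
  have : Nonempty {b : ℕ → Option (Fin n) // ∀ s, s ≤ m → b s = a' s} := ⟨⟨a', fun _ _ => rfl⟩⟩
  rw [ge_iff_le, sub_le_iff_le_add]
  refine ciSup_le fun b' => ?_
  obtain ⟨b, hb, hsum⟩ := exists_sum_Rorra_le_sum_Rorra_add hd m M hsuffix a b'.1
  calc _ ≤ ((∑ t ∈ Icc (m + 1) M, Rorra n d _ b t : ℕ) : ℝ) + d := by exact_mod_cast hsum
    _ ≤ _ := add_le_add_left (le_ciSup hbdd ⟨b, hb⟩) _

/-- ORRA_n is d-bounded-influence: for any two histories `(e, a)` and `(e', a')` of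
length `m` and any common finite-support request suffix `f`, the hindsight optima of
the two partial problems differ by at most `d`. -/
theorem stmt_13 (n d : ℕ) (hd : 1 ≤ d) (m M : ℕ) (hm : m ≤ M)
    (e e' : ℕ → Fin n → Bool) (a a' : ℕ → Option (Fin n))
    (f : ℕ → Fin n → Bool) (hfin : ∀ t, M < t → ∀ i, f t i = false) :
    (⨆ b : {b : ℕ → Option (Fin n) // ∀ s, s ≤ m → b s = a s},
        ((∑ t ∈ Finset.Icc (m + 1) M,
            Rorra n d (fun s => if s ≤ m then e s else f s) b.1 t : ℕ) : ℝ))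
      ≥ (⨆ b : {b : ℕ → Option (Fin n) // ∀ s, s ≤ m → b s = a' s},
          ((∑ t ∈ Finset.Icc (m + 1) M,
              Rorra n d (fun s => if s ≤ m then e' s else f s) b.1 t : ℕ) : ℝ))
        - (d : ℝ) :=
  stmt_13_general n d hd m M e e' a a' f
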